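/- Freeze-and-compare lemma (deterministic core of the stopping-time induction in Theorem 2): Let a < b and θ ∈ ℝ. Let B, U : ℝ → ℝ be continuous on [a,b] with B(a) = U(a) = θ, and suppose the level set {t ∈ [a,b] : B(t) = θ} is finite. Assume: (i) for all a ≤ s ≤ t ≤ b, if B(u) ≥ θ for all u ∈ [s,t], then B(t) − B(s) ≤ U(t) − U(s); and (ii) for all a ≤ s ≤ t ≤ b, if B(u) ≤ θ for all u ∈ [s,t], then U(t) = U(s). Then B(t) ≤ U(t) for all t ∈ [a,b]. -/
import Mathlib

/-- No-crossing on an interval forces a constant sign of `B - θ`. -/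
lemma fc_sign (s t θ : ℝ) (B : ℝ → ℝ) (hcont : ContinuousOn B (Set.Icc s t))
    (hnz : ∀ u, s < u → u < t → B u ≠ θ)
    (x y : ℝ) (hx : x ∈ Set.Icc s t) (hy : y ∈ Set.Icc s t)
    (hxθ : B x < θ) (hyθ : θ < B y) : False := by
  rcases lt_trichotomy x y with h | h | h
  · obtain ⟨v, hv, hvθ⟩ := intermediate_value_Ioo (le_of_lt h)
      (hcont.mono (Set.Icc_subset_Icc hx.1 hy.2)) ⟨hxθ, hyθ⟩
    exact hnz v (lt_of_le_of_lt hx.1 hv.1) (lt_of_lt_of_le hv.2 hy.2) hvθ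
  · subst h; linarith
  · obtain ⟨v, hv, hvθ⟩ := intermediate_value_Ioo' (le_of_lt h)
      (hcont.mono (Set.Icc_subset_Icc hy.1 hx.2)) ⟨hxθ, hyθ⟩
    exact hnz v (lt_of_le_of_lt hy.1 hv.1) (lt_of_lt_of_le hv.2 hx.2) hvθ

/-- One step: between consecutive crossings `U` does not decrease, and `B t` is
controlled. -/
lemma fc_step (a b θ : ℝ) (B U : ℝ → ℝ)
    (hBcont : ContinuousOn B (Set.Icc a b))
    (hup : ∀ s t : ℝ, a ≤ s → s ≤ t → t ≤ b →
      (∀ u ∈ Set.Icc s t, θ ≤ B u) → B t - B s ≤ U t - U s)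
    (hfrozen : ∀ s t : ℝ, a ≤ s → s ≤ t → t ≤ b →
      (∀ u ∈ Set.Icc s t, B u ≤ θ) → U t = U s)
    (s t : ℝ) (has : a ≤ s) (hst : s ≤ t) (htb : t ≤ b)
    (hBs : B s = θ)
    (hnz : ∀ u, s < u → u < t → B u ≠ θ) :
    U s ≤ U t ∧ (B t ≤ θ ∨ B t - θ ≤ U t - U s) := by
  rcases eq_or_lt_of_le hst with rfl | hlt
  · exact ⟨le_refl _, Or.inl (le_of_eq hBs)⟩
  have hcont : ContinuousOn B (Set.Icc s t) := hBcont.mono (Set.Icc_subset_Icc has htb)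
  rcases lt_trichotomy (B t) θ with h | h | h
  · -- B t < θ : B ≤ θ on [s,t], frozen
    have hle : ∀ u ∈ Set.Icc s t, B u ≤ θ := by
      intro u hu
      by_contra hgt
      exact fc_sign s t θ B hcont hnz t u (Set.right_mem_Icc.2 hst) hu h (lt_of_not_ge hgt)
    have := hfrozen s t has hst htb hle
    exact ⟨le_of_eq this.symm, Or.inl (le_of_lt h)⟩
  · -- B t = θ : look at sign at a midpoint
    set u0 : ℝ := (s + t) / 2 with hu0
    have hsu0 : s < u0 := by simp only [hu0]; linarith
    have hu0t : u0 < t := by simp only [hu0]; linarith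
    have hu0mem : u0 ∈ Set.Icc s t := ⟨le_of_lt hsu0, le_of_lt hu0t⟩
    have hne : B u0 ≠ θ := hnz u0 hsu0 hu0t
    rcases lt_or_gt_of_ne hne with hneg | hpos
    · have hle : ∀ u ∈ Set.Icc s t, B u ≤ θ := by
        intro u hu
        by_contra hgt
        exact fc_sign s t θ B hcont hnz u0 u hu0mem hu hneg (lt_of_not_ge hgt)
      have := hfrozen s t has hst htb hle
      exact ⟨le_of_eq this.symm, Or.inl (le_of_eq h)⟩
    · have hge : ∀ u ∈ Set.Icc s t, θ ≤ B u := by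
        intro u hu
        by_contra hlt'
        exact fc_sign s t θ B hcont hnz u u0 hu hu0mem (lt_of_not_ge hlt') hpos
      have := hup s t has hst htb hge
      constructor
      · linarith [hBs, h]
      · exact Or.inr (by linarith [hBs])
  · -- B t > θ : B ≥ θ on [s,t]
    have hge : ∀ u ∈ Set.Icc s t, θ ≤ B u := by
      intro u hu
      by_contra hlt'
      exact fc_sign s t θ B hcont hnz u t hu (Set.right_mem_Icc.2 hst) (lt_of_not_ge hlt') h
    have := hup s t has hst htb hge
    exact ⟨by linarith [hBs], Or.inr (by linarith [hBs])⟩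

/-- Freeze-and-compare lemma (deterministic core of the stopping-time induction in
Theorem 2): if `B` and `U` are continuous on `[a,b]`, start at the common level `θ`,
`B` crosses the level `θ` only finitely often, `U` dominates the increments of `B`
on intervals where `B ≥ θ` and is frozen on intervals where `B ≤ θ`,
then `B ≤ U` on `[a,b]`. -/
theorem freeze_and_compare (a b θ : ℝ) (hab : a < b) (B U : ℝ → ℝ)
    (hBcont : ContinuousOn B (Set.Icc a b)) (hUcont : ContinuousOn U (Set.Icc a b))
    (hBa : B a = θ) (hUa : U a = θ)
    (hfin : {t ∈ Set.Icc a b | B t = θ}.Finite)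
    (hup : ∀ s t : ℝ, a ≤ s → s ≤ t → t ≤ b →
      (∀ u ∈ Set.Icc s t, θ ≤ B u) → B t - B s ≤ U t - U s)
    (hfrozen : ∀ s t : ℝ, a ≤ s → s ≤ t → t ≤ b →
      (∀ u ∈ Set.Icc s t, B u ≤ θ) → U t = U s) :
    ∀ t ∈ Set.Icc a b, B t ≤ U t := by
  set Z : Set ℝ := {t ∈ Set.Icc a b | B t = θ} with hZ
  have haZ : a ∈ Z := ⟨⟨le_refl a, le_of_lt hab⟩, hBa⟩
  -- At every crossing point, U is at least θ.
  have key : ∀ n : ℕ, ∀ s, s ∈ Z → ({u ∈ Z | u < s}).ncard ≤ n → θ ≤ U s := by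
    intro n
    induction n using Nat.strong_induction_on with
    | _ n IH =>
      intro s hs hcard
      rcases eq_or_lt_of_le hs.1.1 with rfl | has
      · exact le_of_eq hUa.symm
      · set S' : Set ℝ := {u ∈ Z | u < s} with hS'
        have hS'fin : S'.Finite := hfin.subset (fun u hu => hu.1)
        have hS'ne : S'.Nonempty := ⟨a, haZ, has⟩
        set s' : ℝ := sSup S' with hs'
        have hs'mem : s' ∈ S' := Set.Nonempty.csSup_mem hS'ne hS'fin
        have hs'Z : s' ∈ Z := hs'mem.1
        have hs's : s' < s := hs'mem.2
        have hnz : ∀ u, s' < u → u < s → B u ≠ θ := by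
          intro u h1 h2 hBu
          have huZ : u ∈ Z := ⟨⟨le_trans hs'Z.1.1 (le_of_lt h1), le_trans (le_of_lt h2) hs.1.2⟩, hBu⟩
          have : u ≤ s' := le_csSup hS'fin.bddAbove ⟨huZ, h2⟩
          linarith
        have hstep := fc_step a b θ B U hBcont hup hfrozen s' s hs'Z.1.1 (le_of_lt hs's)
          hs.1.2 hs'Z.2 hnz
        have hsub : {u ∈ Z | u < s'} ⊆ S' := fun u hu => ⟨hu.1, lt_trans hu.2 hs's⟩
        have hssub : {u ∈ Z | u < s'} ⊂ S' := by
          refine ⟨hsub, fun hcon => ?_⟩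
          have := hcon hs'mem
          exact absurd this.2 (lt_irrefl s')
        have hlt : ({u ∈ Z | u < s'}).ncard < S'.ncard := Set.ncard_lt_ncard hssub hS'fin
        have hIH : θ ≤ U s' := by
          rcases n with _ | m
          · omega
          · exact IH ({u ∈ Z | u < s'}).ncard (by omega) s' hs'Z le_rfl
        linarith [hstep.1]
  -- Main argument: find the last crossing before t.
  intro t ht
  set S : Set ℝ := {u ∈ Z | u ≤ t} with hS
  have hSfin : S.Finite := hfin.subset (fun u hu => hu.1)
  have hSne : S.Nonempty := ⟨a, haZ, ht.1⟩
  set s : ℝ := sSup S with hsdef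
  have hsmem : s ∈ S := Set.Nonempty.csSup_mem hSne hSfin
  have hsZ : s ∈ Z := hsmem.1
  have hst : s ≤ t := hsmem.2
  have hUs : θ ≤ U s :=
    key Z.ncard s hsZ (Set.ncard_le_ncard (fun u hu => hu.1) hfin)
  have hnz : ∀ u, s < u → u < t → B u ≠ θ := by
    intro u h1 h2 hBu
    have huZ : u ∈ Z := ⟨⟨le_trans hsZ.1.1 (le_of_lt h1), le_trans (le_of_lt h2) ht.2⟩, hBu⟩
    have : u ≤ s := le_csSup hSfin.bddAbove ⟨huZ, le_of_lt h2⟩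
    linarith
  have hstep := fc_step a b θ B U hBcont hup hfrozen s t hsZ.1.1 hst ht.2 hsZ.2 hnz
  rcases hstep.2 with h | h
  · linarith [hstep.1]
  · linarith [hstep.1]
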